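/- arXiv:2211.04523 — 8 statements merged into one kernel-verified Lean document; each statement's English description precedes it below -/
import Mathlib

section
/- Let h : [0,∞) → ℝ be a non-decreasing function that is sub-homogeneous of exponent λ, i.e. h(c·x) ≤ c^λ · h(x) for all c ≥ 1 and x ≥ 0. Let μ be a nonzero rational number and ν a rational number. If α ∈ ℝ satisfies inf_{q ∈ ℤ, q ≠ 0} |q|·h(|q|)·‖qα‖ > 0, then μ·α + ν also satisfies inf_{q ∈ ℤ, q ≠ 0} |q|·h(|q|)·‖q(μα+ν)‖ > 0, where ‖x‖ denotes the distance from x to the nearest integer. -/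
/-!
A rational affine map `x ↦ μ x + ν` is a composite of maps `x ↦ n x`, `x ↦ x + m` and `x ↦ x / n`
with integers `m`, `n ≠ 0`. An integer translation does not change `‖q x‖`; division by `n` costs
a factor `|n|` since `‖q x‖ ≤ |n| ‖q x / n‖`; for multiplication by `n` one applies the hypothesis
at `q n` and uses sub-homogeneity, `h |q n| ≤ |n| ^ λ h |q|`.
-/

/-- Distance from a real number to the nearest integer. -/
noncomputable def distInt (x : ℝ) : ℝ := |x - round x|

lemma distInt_nonneg (x : ℝ) : 0 ≤ distInt x := abs_nonneg _

lemma distInt_le_abs_sub_intCast (x : ℝ) (m : ℤ) : distInt x ≤ |x - m| := round_le x m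

lemma distInt_add_intCast (x : ℝ) (m : ℤ) : distInt (x + m) = distInt x := by
  simp only [distInt, round_add_intCast, Int.cast_add, add_sub_add_right_eq_sub]

lemma distInt_intCast_mul_le (n : ℤ) (x : ℝ) : distInt (n * x) ≤ |(n : ℝ)| * distInt x :=
  calc distInt (n * x) ≤ |n * x - ((n * round x : ℤ) : ℝ)| := distInt_le_abs_sub_intCast _ _
    _ = |(n : ℝ)| * distInt x := by rw [distInt, ← abs_mul]; push_cast; ring_nf

def SubHomogeneous (h : ℝ → ℝ) (lam : ℝ) : Prop :=
  ∀ c x : ℝ, 1 ≤ c → 0 ≤ x → h (c * x) ≤ c ^ lam * h x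

/-- Membership in the paper's `Mad(1, h)`. -/
def BadlyApproximable (h : ℝ → ℝ) (α : ℝ) : Prop :=
  ∃ ε > 0, ∀ q : ℤ, q ≠ 0 → ε ≤ |(q : ℝ)| * h |(q : ℝ)| * distInt ((q : ℝ) * α)

namespace BadlyApproximable

variable {h : ℝ → ℝ} {α : ℝ}

lemma abs_mul_pos (hα : BadlyApproximable h α) {q : ℤ} (hq : q ≠ 0) :
    0 < |(q : ℝ)| * h |(q : ℝ)| := by
  obtain ⟨ε, hε, H⟩ := hα
  exact pos_of_mul_pos_left (hε.trans_le (H q hq)) (distInt_nonneg _)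

lemma add_intCast (hα : BadlyApproximable h α) (m : ℤ) : BadlyApproximable h (α + m) := by
  obtain ⟨ε, hε, H⟩ := hα
  refine ⟨ε, hε, fun q hq => ?_⟩
  have hshift : (q : ℝ) * (α + m) = q * α + ((q * m : ℤ) : ℝ) := by push_cast; ring
  rw [hshift, distInt_add_intCast]
  exact H q hq

lemma intCast_mul {lam : ℝ} (hsub : SubHomogeneous h lam)
    (hα : BadlyApproximable h α) {n : ℤ} (hn : n ≠ 0) : BadlyApproximable h (n * α) := by
  obtain ⟨ε, hε, H⟩ := hα
  have hn1 : (1 : ℝ) ≤ |(n : ℝ)| := by exact_mod_cast Int.one_le_abs hn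
  have hC : 0 < |(n : ℝ)| * |(n : ℝ)| ^ lam := by positivity
  refine ⟨ε / (|(n : ℝ)| * |(n : ℝ)| ^ lam), by positivity, fun q hq => ?_⟩
  have hqn : |((q * n : ℤ) : ℝ)| = |(n : ℝ)| * |(q : ℝ)| := by push_cast; rw [abs_mul, mul_comm]
  have hh : h |((q * n : ℤ) : ℝ)| ≤ |(n : ℝ)| ^ lam * h |(q : ℝ)| := by
    rw [hqn]; exact hsub _ _ hn1 (abs_nonneg _)
  rw [div_le_iff₀ hC]
  calc ε ≤ |((q * n : ℤ) : ℝ)| * h |((q * n : ℤ) : ℝ)| * distInt ((q : ℝ) * (n * α)) := by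
        simpa [mul_assoc] using H (q * n) (mul_ne_zero hq hn)
    _ ≤ |((q * n : ℤ) : ℝ)| * (|(n : ℝ)| ^ lam * h |(q : ℝ)|) * distInt ((q : ℝ) * (n * α)) := by
        gcongr
        · exact distInt_nonneg _
    _ = |(q : ℝ)| * h |(q : ℝ)| * distInt ((q : ℝ) * (n * α)) * (|(n : ℝ)| * |(n : ℝ)| ^ lam) := by
        rw [hqn]; ring

lemma div_intCast (hα : BadlyApproximable h α) {n : ℤ} (hn : n ≠ 0) :
    BadlyApproximable h (α / n) := by
  have hpos : ∀ q : ℤ, q ≠ 0 → 0 ≤ |(q : ℝ)| * h |(q : ℝ)| := fun q hq => (hα.abs_mul_pos hq).le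
  obtain ⟨ε, hε, H⟩ := hα
  have hn0 : 0 < |(n : ℝ)| := by positivity
  refine ⟨ε / |(n : ℝ)|, by positivity, fun q hq => ?_⟩
  have hmul : (q : ℝ) * α = n * (q * (α / n)) := by field_simp
  rw [div_le_iff₀ hn0]
  calc ε ≤ |(q : ℝ)| * h |(q : ℝ)| * distInt (n * (q * (α / n))) := hmul ▸ H q hq
    _ ≤ |(q : ℝ)| * h |(q : ℝ)| * (|(n : ℝ)| * distInt (q * (α / n))) :=
        mul_le_mul_of_nonneg_left (distInt_intCast_mul_le _ _) (hpos q hq)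
    _ = _ := by ring

lemma ratCast_mul {lam : ℝ} (hsub : SubHomogeneous h lam)
    (hα : BadlyApproximable h α) {μ : ℚ} (hμ : μ ≠ 0) : BadlyApproximable h (μ * α) := by
  have hμα : (μ : ℝ) * α = μ.num * α / (μ.den : ℤ) := by
    rw [Rat.cast_def]; push_cast; ring
  rw [hμα]
  exact ((hα.intCast_mul hsub (Rat.num_ne_zero.mpr hμ)).div_intCast (by simp))

lemma add_ratCast {lam : ℝ} (hsub : SubHomogeneous h lam)
    (hα : BadlyApproximable h α) (ν : ℚ) : BadlyApproximable h (α + ν) := by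
  have hαν : α + ν = ((ν.den : ℤ) * α + ν.num) / (ν.den : ℤ) := by
    rw [Rat.cast_def]; field_simp; push_cast; ring
  rw [hαν]
  exact (((hα.intCast_mul hsub (by simp)).add_intCast ν.num).div_intCast (by simp))

end BadlyApproximable

theorem stmt0_general (h : ℝ → ℝ) (lam : ℝ)
    (hsub : ∀ c x : ℝ, 1 ≤ c → 0 ≤ x → h (c * x) ≤ c ^ lam * h x)
    (μ ν : ℚ) (hμ : μ ≠ 0) (α : ℝ)
    (hα : ∃ ε > 0, ∀ q : ℤ, q ≠ 0 →
      ε ≤ |(q : ℝ)| * h |(q : ℝ)| * distInt ((q : ℝ) * α)) :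
    ∃ ε > 0, ∀ q : ℤ, q ≠ 0 →
      ε ≤ |(q : ℝ)| * h |(q : ℝ)| * distInt ((q : ℝ) * ((μ : ℝ) * α + (ν : ℝ))) :=
  ((show BadlyApproximable h α from hα).ratCast_mul hsub hμ).add_ratCast hsub ν

theorem stmt0 (h : ℝ → ℝ) (lam : ℝ)
    (hmono : ∀ x y : ℝ, 0 ≤ x → x ≤ y → h x ≤ h y)
    (hsub : ∀ c x : ℝ, 1 ≤ c → 0 ≤ x → h (c * x) ≤ c ^ lam * h x)
    (μ ν : ℚ) (hμ : μ ≠ 0) (α : ℝ)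
    (hα : ∃ ε > 0, ∀ q : ℤ, q ≠ 0 →
      ε ≤ |(q : ℝ)| * h |(q : ℝ)| * distInt ((q : ℝ) * α)) :
    ∃ ε > 0, ∀ q : ℤ, q ≠ 0 →
      ε ≤ |(q : ℝ)| * h |(q : ℝ)| * distInt ((q : ℝ) * ((μ : ℝ) * α + (ν : ℝ))) :=
  stmt0_general h lam hsub μ ν hμ α hα
end

section
/- Let ψ : [0,∞) → (0,1] be continuous and non-increasing, let l ≥ 1, and set h(x) := 1/(x·ψ(x)). Suppose α ∈ ℝ^l is such that there exists κ > 0 with the property: for every T ≥ 1 there is no q ∈ ℤ\{0} and p ∈ ℤ^l satisfying both ∏_{i=1}^l |α_i q − p_i| < κ·ψ(T) and |q| < T. Then inf_{q ∈ ℕ} q·h(q)·∏_{i=1}^l ‖α_i q‖ > 0, i.e. α ∈ Mad(l,h). -/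
open Filter Set

lemma le_prod_distInt_of_not_exists {l : ℕ} {α : Fin l → ℝ} {c T : ℝ}
    (h : ¬ ∃ (q : ℤ) (p : Fin l → ℤ), q ≠ 0 ∧
      (∏ i, |α i * (q : ℝ) - (p i : ℝ)|) < c ∧ |(q : ℝ)| < T)
    {q : ℤ} (hq : q ≠ 0) (hqT : |(q : ℝ)| < T) :
    c ≤ ∏ i, distInt (α i * q) := by
  by_contra! hlt
  exact h ⟨q, fun i => round (α i * q), hq, by simpa [distInt] using hlt, hqT⟩

lemma mul_le_prod_distInt_of_continuousWithinAt {l : ℕ} {α : Fin l → ℝ} {ψ : ℝ → ℝ}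
    {κ : ℝ} {q : ℕ} (hq : q ≠ 0) (hψ : ContinuousWithinAt ψ (Ioi (q : ℝ)) q)
    (hno : ∀ T : ℝ, 1 ≤ T → ¬ ∃ (q : ℤ) (p : Fin l → ℤ), q ≠ 0 ∧
      (∏ i, |α i * (q : ℝ) - (p i : ℝ)|) < κ * ψ T ∧ |(q : ℝ)| < T) :
    κ * ψ q ≤ ∏ i, distInt (α i * q) := by
  have hq1 : (1 : ℝ) ≤ q := by exact_mod_cast Nat.one_le_iff_ne_zero.mpr hq
  refine le_of_tendsto (hψ.tendsto.const_mul κ) (eventually_nhdsWithin_of_forall ?_)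
  intro T (hT : (q : ℝ) < T)
  exact_mod_cast le_prod_distInt_of_not_exists (hno T (hq1.trans hT.le)) (q := q)
    (by exact_mod_cast hq) (by simpa using hT)

theorem stmt1_general (l : ℕ) (ψ : ℝ → ℝ)
    (hcont : ContinuousOn ψ (Set.Ici 0))
    (hpos : ∀ x : ℝ, 0 ≤ x → 0 < ψ x)
    (α : Fin l → ℝ)
    (hκ : ∃ κ > 0, ∀ T : ℝ, 1 ≤ T →
      ¬ ∃ (q : ℤ) (p : Fin l → ℤ), q ≠ 0 ∧
        (∏ i, |α i * (q : ℝ) - (p i : ℝ)|) < κ * ψ T ∧ |(q : ℝ)| < T) :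
    ∃ ε > 0, ∀ q : ℕ, q ≠ 0 →
      ε ≤ (q : ℝ) * (1 / ((q : ℝ) * ψ (q : ℝ))) * ∏ i, distInt (α i * (q : ℝ)) := by
  obtain ⟨κ, hκ, hno⟩ := hκ
  refine ⟨κ, hκ, fun q hq => ?_⟩
  have hq0 : (0 : ℝ) < q := by exact_mod_cast Nat.pos_of_ne_zero hq
  have hψ : ContinuousWithinAt ψ (Ioi (q : ℝ)) q :=
    (hcont q hq0.le).mono fun x hx => hq0.le.trans (le_of_lt hx)
  have hψq := hpos q hq0.le
  calc κ = κ * ψ q / ψ q := by field_simp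
    _ ≤ (∏ i, distInt (α i * q)) / ψ q := by
      gcongr; exact mul_le_prod_distInt_of_continuousWithinAt hq hψ hno
    _ = _ := by rw [div_eq_inv_mul]; congr 1; field_simp

theorem stmt1 (l : ℕ) (hl : 1 ≤ l) (ψ : ℝ → ℝ)
    (hcont : ContinuousOn ψ (Set.Ici 0))
    (hmono : ∀ x y : ℝ, 0 ≤ x → x ≤ y → ψ y ≤ ψ x)
    (hpos : ∀ x : ℝ, 0 ≤ x → 0 < ψ x) (hone : ∀ x : ℝ, 0 ≤ x → ψ x ≤ 1)
    (α : Fin l → ℝ)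
    (hκ : ∃ κ > 0, ∀ T : ℝ, 1 ≤ T →
      ¬ ∃ (q : ℤ) (p : Fin l → ℤ), q ≠ 0 ∧
        (∏ i, |α i * (q : ℝ) - (p i : ℝ)|) < κ * ψ T ∧ |(q : ℝ)| < T) :
    ∃ ε > 0, ∀ q : ℕ, q ≠ 0 →
      ε ≤ (q : ℝ) * (1 / ((q : ℝ) * ψ (q : ℝ))) * ∏ i, distInt (α i * (q : ℝ)) :=
  stmt1_general l ψ hcont hpos α hκ
end

section
/- For any m, n ∈ ℕ and any continuous non-increasing function ψ : [0,∞) → (0,1], there exists a unique continuous function R : [0,∞) → ℝ such that: (i) the map t ↦ t − n·R(t) is strictly increasing and tends to ∞ as t → ∞; (ii) the map t ↦ t + m·R(t) is non-decreasing; and (iii) ψ(e^{t − nR(t)}) = e^{−t − mR(t)} for all t ≥ 0. -/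
open Filter Real Set

/-!
Put `h p = -log ψ(eᵖ)`, a continuous non-decreasing function on `ℝ`. Writing `s = t - nR` and
taking logarithms, condition (iii) says `h s = t + mR`; eliminating `R` gives
`m s + n h(s) = (m + n) t`. Since `p ↦ m p + n h(p)` is a strictly increasing homeomorphism
of `ℝ`, this determines `s`, hence `R`, uniquely and continuously in `t`; then
`t - nR(t) = s(t)` is strictly increasing and unbounded, and `t + mR(t) = h(s(t))` is
non-decreasing.
-/

section MulAddMul

variable {h : ℝ → ℝ} {a b : ℝ}

theorem Monotone.strictMono_mul_add_mul (hh : Monotone h) (ha : 0 < a) (hb : 0 ≤ b) :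
    StrictMono fun p => a * p + b * h p :=
  (strictMono_mul_left_of_pos ha).add_monotone (hh.const_mul hb)

theorem Monotone.tendsto_mul_add_mul_atTop (hh : Monotone h) (ha : 0 < a) (hb : 0 ≤ b) :
    Tendsto (fun p => a * p + b * h p) atTop atTop :=
  tendsto_atTop_add_right_of_le' _ (b * h 0) (tendsto_id.const_mul_atTop ha) <|
    (eventually_ge_atTop 0).mono fun _ hp => mul_le_mul_of_nonneg_left (hh hp) hb

theorem Monotone.tendsto_mul_add_mul_atBot (hh : Monotone h) (ha : 0 < a) (hb : 0 ≤ b) :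
    Tendsto (fun p => a * p + b * h p) atBot atBot := by
  have hbound : ∀ᶠ p in atBot, b * h p ≤ b * h 0 :=
    (eventually_le_atBot 0).mono fun _ hp => mul_le_mul_of_nonneg_left (hh hp) hb
  simpa only [add_comm, id] using
    tendsto_atBot_add_left_of_ge' _ (b * h 0) hbound (tendsto_id.const_mul_atBot ha)

noncomputable def Monotone.mulAddMulOrderIso (hh : Monotone h) (hc : Continuous h) (ha : 0 < a)
    (hb : 0 ≤ b) : ℝ ≃o ℝ :=
  StrictMono.orderIsoOfSurjective _ (hh.strictMono_mul_add_mul ha hb) <|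
    (continuous_const.mul continuous_id).add (continuous_const.mul hc) |>.surjective
      (hh.tendsto_mul_add_mul_atTop ha hb) (hh.tendsto_mul_add_mul_atBot ha hb)

theorem Monotone.mulAddMulOrderIso_apply (hh : Monotone h) (hc : Continuous h) (ha : 0 < a)
    (hb : 0 ≤ b) (p : ℝ) : hh.mulAddMulOrderIso hc ha hb p = a * p + b * h p :=
  rfl

theorem Monotone.apply_sub_mul_eq_add_mul_iff (hh : Monotone h) (hc : Continuous h) (ha : 0 < a)
    (hb : 0 < b) (t r : ℝ) :
    h (t - b * r) = t + a * r ↔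
      r = (t - (hh.mulAddMulOrderIso hc ha hb.le).symm ((a + b) * t)) / b := by
  set e := hh.mulAddMulOrderIso hc ha hb.le
  calc h (t - b * r) = t + a * r
      ↔ e (t - b * r) = (a + b) * t := by
        rw [hh.mulAddMulOrderIso_apply, ← mul_right_inj' hb.ne']
        constructor <;> intro hyp <;> linarith
    _ ↔ t - b * r = e.symm ((a + b) * t) := e.eq_symm_apply.symm
    _ ↔ r = (t - e.symm ((a + b) * t)) / b := by
        rw [eq_div_iff hb.ne']
        constructor <;> intro hyp <;> linarith

end MulAddMul

section NegLogExp

variable {ψ : ℝ → ℝ}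

noncomputable def negLogExp (ψ : ℝ → ℝ) (p : ℝ) : ℝ :=
  -log (ψ (exp p))

theorem continuous_negLogExp (hcont : ContinuousOn ψ (Ioi 0)) (hpos : ∀ x, 0 < x → 0 < ψ x) :
    Continuous (negLogExp ψ) :=
  continuous_iff_continuousAt.2 fun p =>
    (((hcont.continuousAt (Ioi_mem_nhds (exp_pos p))).comp continuous_exp.continuousAt).log
      (hpos _ (exp_pos p)).ne').neg

theorem monotone_negLogExp (hmono : AntitoneOn ψ (Ioi 0)) (hpos : ∀ x, 0 < x → 0 < ψ x) :
    Monotone (negLogExp ψ) := fun p q hpq =>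
  neg_le_neg <| log_le_log (hpos _ (exp_pos q)) <|
    hmono (exp_pos p) (exp_pos q) (exp_le_exp.2 hpq)

theorem apply_exp_eq_exp_neg_iff (hpos : ∀ x, 0 < x → 0 < ψ x) (p x : ℝ) :
    ψ (exp p) = exp (-x) ↔ negLogExp ψ p = x := by
  rw [← exp_log (hpos _ (exp_pos p)), exp_eq_exp, negLogExp, neg_eq_iff_eq_neg]

end NegLogExp

theorem stmt3_general (m n : ℕ) (hm : 0 < m) (hn : 0 < n) (ψ : ℝ → ℝ)
    (hcont : ContinuousOn ψ (Set.Ici 0))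
    (hmono : ∀ x y : ℝ, 0 ≤ x → x ≤ y → ψ y ≤ ψ x)
    (hpos : ∀ x : ℝ, 0 ≤ x → 0 < ψ x) :
    ∃ R : ℝ → ℝ,
      (ContinuousOn R (Set.Ici 0) ∧
        StrictMonoOn (fun t => t - (n : ℝ) * R t) (Set.Ici 0) ∧
        Filter.Tendsto (fun t => t - (n : ℝ) * R t) Filter.atTop Filter.atTop ∧
        MonotoneOn (fun t => t + (m : ℝ) * R t) (Set.Ici 0) ∧
        ∀ t : ℝ, 0 ≤ t → ψ (Real.exp (t - (n : ℝ) * R t)) = Real.exp (-t - (m : ℝ) * R t)) ∧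
      ∀ R' : ℝ → ℝ,
        (ContinuousOn R' (Set.Ici 0) ∧
          StrictMonoOn (fun t => t - (n : ℝ) * R' t) (Set.Ici 0) ∧
          Filter.Tendsto (fun t => t - (n : ℝ) * R' t) Filter.atTop Filter.atTop ∧
          MonotoneOn (fun t => t + (m : ℝ) * R' t) (Set.Ici 0) ∧
          ∀ t : ℝ, 0 ≤ t → ψ (Real.exp (t - (n : ℝ) * R' t)) = Real.exp (-t - (m : ℝ) * R' t)) →
        ∀ t : ℝ, 0 ≤ t → R' t = R t := by
  have hpos' : ∀ x, 0 < x → 0 < ψ x := fun x hx => hpos x hx.le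
  have hh := monotone_negLogExp (fun x hx y _ hxy => hmono x y (le_of_lt hx) hxy) hpos'
  have hc := continuous_negLogExp (hcont.mono Ioi_subset_Ici_self) hpos'
  have hm' : (0 : ℝ) < m := Nat.cast_pos.2 hm
  have hn' : (0 : ℝ) < n := Nat.cast_pos.2 hn
  set e := hh.mulAddMulOrderIso hc hm' hn'.le
  set s : ℝ → ℝ := fun t => e.symm ((m + n) * t)
  have hs : StrictMono s := e.symm.strictMono.comp (strictMono_mul_left_of_pos (by positivity))
  have key : ∀ t r, ψ (exp (t - n * r)) = exp (-t - m * r) ↔ r = (t - s t) / n := fun t r => by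
    rw [← neg_add', apply_exp_eq_exp_neg_iff hpos', hh.apply_sub_mul_eq_add_mul_iff hc hm' hn']
  set R : ℝ → ℝ := fun t => (t - s t) / n
  have hsR : ∀ t, t - n * R t = s t := fun t => by simp only [R]; field_simp; ring
  have hhR : ∀ t, t + m * R t = negLogExp ψ (s t) := fun t => by
    rw [← hsR]; exact ((hh.apply_sub_mul_eq_add_mul_iff hc hm' hn' t (R t)).2 rfl).symm
  refine ⟨R, ⟨?_, ?_, ?_, ?_, fun t _ => (key t _).2 rfl⟩,
    fun R' hR' t ht => (key t _).1 (hR'.2.2.2.2 t ht)⟩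
  · have hsc : Continuous s := e.symm.continuous.comp (continuous_const_mul _)
    exact ((continuous_id.sub hsc).div_const _).continuousOn
  · exact funext hsR ▸ hs.strictMonoOn _
  · exact funext hsR ▸ e.symm.tendsto_atTop.comp (tendsto_id.const_mul_atTop (by positivity))
  · exact funext hhR ▸ (hh.comp hs.monotone).monotoneOn _

theorem stmt3 (m n : ℕ) (hm : 0 < m) (hn : 0 < n) (ψ : ℝ → ℝ)
    (hcont : ContinuousOn ψ (Set.Ici 0))
    (hmono : ∀ x y : ℝ, 0 ≤ x → x ≤ y → ψ y ≤ ψ x)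
    (hpos : ∀ x : ℝ, 0 ≤ x → 0 < ψ x) (hone : ∀ x : ℝ, 0 ≤ x → ψ x ≤ 1) :
    ∃ R : ℝ → ℝ,
      (ContinuousOn R (Set.Ici 0) ∧
        StrictMonoOn (fun t => t - (n : ℝ) * R t) (Set.Ici 0) ∧
        Filter.Tendsto (fun t => t - (n : ℝ) * R t) Filter.atTop Filter.atTop ∧
        MonotoneOn (fun t => t + (m : ℝ) * R t) (Set.Ici 0) ∧
        ∀ t : ℝ, 0 ≤ t → ψ (Real.exp (t - (n : ℝ) * R t)) = Real.exp (-t - (m : ℝ) * R t)) ∧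
      ∀ R' : ℝ → ℝ,
        (ContinuousOn R' (Set.Ici 0) ∧
          StrictMonoOn (fun t => t - (n : ℝ) * R' t) (Set.Ici 0) ∧
          Filter.Tendsto (fun t => t - (n : ℝ) * R' t) Filter.atTop Filter.atTop ∧
          MonotoneOn (fun t => t + (m : ℝ) * R' t) (Set.Ici 0) ∧
          ∀ t : ℝ, 0 ≤ t → ψ (Real.exp (t - (n : ℝ) * R' t)) = Real.exp (-t - (m : ℝ) * R' t)) →
        ∀ t : ℝ, 0 ≤ t → R' t = R t :=
  stmt3_general m n hm hn ψ hcont hmono hpos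
end

section
/- Let m, n ∈ ℕ, t₀ ≥ 0, and let R : [t₀,∞) → ℝ be a continuous function such that t ↦ t − nR(t) is strictly increasing and tends to ∞, and t ↦ t + mR(t) is non-decreasing. Then there exists a unique continuous non-increasing function ψ : [x₀,∞) → (0,∞), where x₀ = e^{t₀ − nR(t₀)}, such that ψ(e^{t−nR(t)}) = e^{−t−mR(t)} for all t ≥ t₀. -/
/-!
With `ℓ t = exp (t - n R t)` and `h t = exp (-t - m R t)`, the function `ℓ` is a continuous
increasing bijection of `[t₀, ∞)` onto `[x₀, ∞)` (intermediate value theorem), so `ψ = h ∘ ℓ⁻¹` is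
forced. It is continuous because `ℓ⁻¹`, an order isomorphism, is a homeomorphism, and
non-increasing because `h` is.
-/

open Set Filter

theorem ContinuousOn.surjOn_Ici_of_tendsto_atTop {α δ : Type*} [ConditionallyCompleteLinearOrder α]
    [TopologicalSpace α] [OrderTopology α] [DenselyOrdered α] [LinearOrder δ] [TopologicalSpace δ]
    [OrderClosedTopology δ] {f : α → δ} {a : α} (hf : ContinuousOn f (Ici a))
    (htop : Tendsto f atTop atTop) : SurjOn f (Ici a) (Ici (f a)) := by
  intro y hy
  have : Nonempty α := ⟨a⟩
  obtain ⟨b, hyb, hab⟩ := ((htop.eventually_ge_atTop y).and (eventually_ge_atTop a)).exists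
  exact hf.surjOn_Icc self_mem_Ici hab ⟨hy, hyb⟩

theorem StrictMonoOn.exists_continuous_monotone_leftInvOn {α β : Type*} [LinearOrder α]
    [TopologicalSpace α] [OrderTopology α] [LinearOrder β] [TopologicalSpace β] [OrderTopology β]
    {f : α → β} {a : α} (hf : StrictMonoOn f (Ici a)) (hsurj : SurjOn f (Ici a) (Ici (f a))) :
    ∃ u : β → α, Continuous u ∧ Monotone u ∧ (∀ y, u y ∈ Ici a) ∧ LeftInvOn u f (Ici a) := by
  have hmaps : MapsTo f (Ici a) (Ici (f a)) := fun t ht => hf.monotoneOn self_mem_Ici ht ht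
  let e := StrictMono.orderIsoOfSurjective (hmaps.restrict f _ _)
    (fun s t hst => hf s.2 t.2 hst) (hmaps.restrict_surjective_iff.2 hsurj)
  have hproj : Continuous (projIci (f a)) := (continuous_const.max continuous_id).subtype_mk _
  refine ⟨fun y => e.symm (projIci (f a) y),
    continuous_subtype_val.comp (e.symm.continuous.comp hproj),
    fun x y hxy => e.symm.monotone (monotone_projIci hxy), fun y => (e.symm _).2, fun t ht => ?_⟩
  have : projIci (f a) (f t) = e ⟨t, ht⟩ := projIci_of_mem (hmaps ht)
  simp only [this, OrderIso.symm_apply_apply]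

theorem stmt4_general (m n : ℕ) (t₀ : ℝ)
    (R : ℝ → ℝ) (hRcont : ContinuousOn R (Set.Ici t₀))
    (hR1 : StrictMonoOn (fun t => t - (n : ℝ) * R t) (Set.Ici t₀))
    (hR2 : Filter.Tendsto (fun t => t - (n : ℝ) * R t) Filter.atTop Filter.atTop)
    (hR3 : MonotoneOn (fun t => t + (m : ℝ) * R t) (Set.Ici t₀)) :
    ∃ ψ : ℝ → ℝ,
      (ContinuousOn ψ (Set.Ici (Real.exp (t₀ - (n : ℝ) * R t₀))) ∧
        (∀ x y : ℝ, Real.exp (t₀ - (n : ℝ) * R t₀) ≤ x → x ≤ y → ψ y ≤ ψ x) ∧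
        (∀ x : ℝ, Real.exp (t₀ - (n : ℝ) * R t₀) ≤ x → 0 < ψ x) ∧
        ∀ t : ℝ, t₀ ≤ t →
          ψ (Real.exp (t - (n : ℝ) * R t)) = Real.exp (-t - (m : ℝ) * R t)) ∧
      ∀ ψ' : ℝ → ℝ,
        (ContinuousOn ψ' (Set.Ici (Real.exp (t₀ - (n : ℝ) * R t₀))) ∧
          (∀ x y : ℝ, Real.exp (t₀ - (n : ℝ) * R t₀) ≤ x → x ≤ y → ψ' y ≤ ψ' x) ∧
          (∀ x : ℝ, Real.exp (t₀ - (n : ℝ) * R t₀) ≤ x → 0 < ψ' x) ∧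
          ∀ t : ℝ, t₀ ≤ t →
            ψ' (Real.exp (t - (n : ℝ) * R t)) = Real.exp (-t - (m : ℝ) * R t)) →
        ∀ x : ℝ, Real.exp (t₀ - (n : ℝ) * R t₀) ≤ x → ψ' x = ψ x := by
  set ℓ : ℝ → ℝ := fun t => Real.exp (t - n * R t)
  set h : ℝ → ℝ := fun t => Real.exp (-t - m * R t)
  have hℓ_mono : StrictMonoOn ℓ (Ici t₀) := Real.exp_strictMono.comp_strictMonoOn hR1
  have hℓ_surj : SurjOn ℓ (Ici t₀) (Ici (ℓ t₀)) :=
    (continuousOn_id.sub (continuousOn_const.mul hRcont)).rexp.surjOn_Ici_of_tendsto_atTop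
      (Real.tendsto_exp_atTop.comp hR2)
  have hh_cont : ContinuousOn h (Ici t₀) :=
    (continuousOn_id.neg.sub (continuousOn_const.mul hRcont)).rexp
  have hh_anti : AntitoneOn h (Ici t₀) := fun s hs t ht hst =>
    Real.exp_le_exp.2 (by linarith [hR3 hs ht hst])
  obtain ⟨u, hu_cont, hu_mono, hu_mem, hu_inv⟩ :=
    hℓ_mono.exists_continuous_monotone_leftInvOn hℓ_surj
  refine ⟨h ∘ u, ⟨hh_cont.comp_continuous hu_cont hu_mem |>.continuousOn,
    fun x y _ hxy => hh_anti (hu_mem x) (hu_mem y) (hu_mono hxy), fun x _ => Real.exp_pos _,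
    fun t ht => congrArg h (hu_inv ht)⟩, ?_⟩
  rintro ψ' ⟨-, -, -, hψ'⟩
  have hψ'_eq : EqOn (ψ' ∘ ℓ) (h ∘ u ∘ ℓ) (Ici t₀) := fun t ht =>
    (hψ' t ht).trans (congrArg h (hu_inv ht)).symm
  exact hψ'_eq.cancel_right hℓ_surj

theorem stmt4 (m n : ℕ) (hm : 0 < m) (hn : 0 < n) (t₀ : ℝ) (ht₀ : 0 ≤ t₀)
    (R : ℝ → ℝ) (hRcont : ContinuousOn R (Set.Ici t₀))
    (hR1 : StrictMonoOn (fun t => t - (n : ℝ) * R t) (Set.Ici t₀))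
    (hR2 : Filter.Tendsto (fun t => t - (n : ℝ) * R t) Filter.atTop Filter.atTop)
    (hR3 : MonotoneOn (fun t => t + (m : ℝ) * R t) (Set.Ici t₀)) :
    ∃ ψ : ℝ → ℝ,
      (ContinuousOn ψ (Set.Ici (Real.exp (t₀ - (n : ℝ) * R t₀))) ∧
        (∀ x y : ℝ, Real.exp (t₀ - (n : ℝ) * R t₀) ≤ x → x ≤ y → ψ y ≤ ψ x) ∧
        (∀ x : ℝ, Real.exp (t₀ - (n : ℝ) * R t₀) ≤ x → 0 < ψ x) ∧
        ∀ t : ℝ, t₀ ≤ t →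
          ψ (Real.exp (t - (n : ℝ) * R t)) = Real.exp (-t - (m : ℝ) * R t)) ∧
      ∀ ψ' : ℝ → ℝ,
        (ContinuousOn ψ' (Set.Ici (Real.exp (t₀ - (n : ℝ) * R t₀))) ∧
          (∀ x y : ℝ, Real.exp (t₀ - (n : ℝ) * R t₀) ≤ x → x ≤ y → ψ' y ≤ ψ' x) ∧
          (∀ x : ℝ, Real.exp (t₀ - (n : ℝ) * R t₀) ≤ x → 0 < ψ' x) ∧
          ∀ t : ℝ, t₀ ≤ t →
            ψ' (Real.exp (t - (n : ℝ) * R t)) = Real.exp (-t - (m : ℝ) * R t)) →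
        ∀ x : ℝ, Real.exp (t₀ - (n : ℝ) * R t₀) ≤ x → ψ' x = ψ x :=
  stmt4_general m n t₀ R hRcont hR1 hR2 hR3
end

section
/- Let ψ : [1,∞) → (0,1] be continuous and non-increasing with associated function R satisfying ψ(e^{t−nR(t)}) = e^{−t−mR(t)} (with t ↦ t−nR(t) strictly increasing to ∞ and t ↦ t+mR(t) non-decreasing). If Y ∈ ℝ^{m×n} admits, for some T ≥ 1 and corresponding t with T = e^{t−nR(t)}, a vector (t⃗,u⃗) ∈ ℝ^{m+n} with ∑t_i = ∑u_j = t, t_i > −R(t), u_j > R(t), and a nonzero v ∈ a(t⃗,u⃗)Λ_Y with sup-norm < e^{−R(t)}, then there exist p ∈ ℤ^m, q ∈ ℤ^n\{0} with ∏_{i=1}^m |Y_i q − p_i| < ψ(T) and ∏_{j=1}^n max(|q_j|,1) < T. -/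
/-!
Write the short vector as `a(t⃗, u⃗) u_Y (p, q)`. Its coordinates give
`|Y_i q + p_i| < e^{-R(t) - t_i}` and `|q_j| < e^{u_j - R(t)}`, and `u_j > R(t)` also gives
`1 < e^{u_j - R(t)}`. Moreover `q ≠ 0`: otherwise some `p_i ≠ 0`, and then
`|e^{t_i} p_i| ≥ e^{t_i} > e^{-R(t)}`. Multiplying the coordinate bounds, `∑ t_i = ∑ u_j = t`
turns the products into `e^{-t - mR(t)} = ψ(T)` and `e^{t - nR(t)} = T`.
-/

open Finset Real

theorem Finset.prod_lt_prod_of_nonempty_of_nonneg {ι R : Type*} [CommSemiring R] [PartialOrder R]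
    [IsStrictOrderedRing R] {s : Finset ι} {f g : ι → R} (hs : s.Nonempty)
    (hf : ∀ i ∈ s, 0 ≤ f i) (hfg : ∀ i ∈ s, f i < g i) :
    ∏ i ∈ s, f i < ∏ i ∈ s, g i := by
  induction hs using Finset.Nonempty.cons_induction with
  | singleton a => simpa using hfg a (mem_singleton_self a)
  | cons a s _ _ ih =>
    simp only [prod_cons, mem_cons, forall_eq_or_imp] at hf hfg ⊢
    exact mul_lt_mul'' hfg.1 (ih hf.2 hfg.2) hf.1 (prod_nonneg hf.2)

theorem Real.prod_lt_exp_sum {ι : Type*} {s : Finset ι} {f g : ι → ℝ} (hs : s.Nonempty)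
    (hf : ∀ i ∈ s, 0 ≤ f i) (hfg : ∀ i ∈ s, f i < exp (g i)) :
    ∏ i ∈ s, f i < exp (∑ i ∈ s, g i) := by
  rw [exp_sum]
  exact prod_lt_prod_of_nonempty_of_nonneg hs hf hfg

theorem Real.abs_lt_exp_sub_of_abs_exp_mul_lt {s r x : ℝ} (h : |exp s * x| < exp r) :
    |x| < exp (r - s) := by
  rwa [abs_mul, abs_exp, ← lt_div_iff₀' (exp_pos s), ← exp_sub] at h

theorem Int.eq_zero_of_abs_exp_mul_lt {a : ℤ} {s r : ℝ} (hrs : r ≤ s)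
    (h : |exp s * a| < exp r) : a = 0 := by
  by_contra ha
  have h_one_le : (1 : ℝ) ≤ |(a : ℝ)| := by exact_mod_cast Int.one_le_abs ha
  have h_small := abs_lt_exp_sub_of_abs_exp_mul_lt h
  have : exp (r - s) ≤ 1 := exp_le_one_iff.mpr (by linarith)
  linarith

theorem stmt6_general (m n : ℕ) (hm : 0 < m)
    (ψ : ℝ → ℝ)
    (R : ℝ → ℝ)
    (hR4 : ∀ t : ℝ, 0 ≤ t →
      ψ (Real.exp (t - (n : ℝ) * R t)) = Real.exp (-t - (m : ℝ) * R t))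
    (Y : Matrix (Fin m) (Fin n) ℝ) (T : ℝ)
    (t : ℝ) (ht : 0 ≤ t) (hTt : T = Real.exp (t - (n : ℝ) * R t))
    (hdyn : ∃ (tv : Fin m → ℝ) (uv : Fin n → ℝ),
        (∑ i, tv i) = t ∧ (∑ j, uv j) = t ∧
        (∀ i, -R t < tv i) ∧ (∀ j, R t < uv j) ∧
        ∃ (p : Fin m → ℤ) (q : Fin n → ℤ), ¬ (p = 0 ∧ q = 0) ∧
          (∀ i, |Real.exp (tv i) * ((p i : ℝ) + ∑ j, Y i j * (q j : ℝ))|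
              < Real.exp (-R t)) ∧
          (∀ j, |Real.exp (-(uv j)) * (q j : ℝ)| < Real.exp (-R t))) :
    ∃ (p : Fin m → ℤ) (q : Fin n → ℤ), q ≠ 0 ∧
      (∏ i, |(∑ j, Y i j * (q j : ℝ)) - (p i : ℝ)|) < ψ T ∧
      (∏ j, max |(q j : ℝ)| 1) < T := by
  obtain ⟨tv, uv, htv, huv, htv_gt, huv_gt, p, q, hpq, hp_small, hq_small⟩ := hdyn
  have hq : q ≠ 0 := by
    rintro rfl
    refine hpq ⟨funext fun i => Int.eq_zero_of_abs_exp_mul_lt (htv_gt i).le ?_, rfl⟩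
    simpa using hp_small i
  obtain ⟨j₀, -⟩ := Function.ne_iff.mp hq
  refine ⟨-p, q, hq, ?_, ?_⟩
  · have hψT : ψ T = exp (∑ i, (-R t - tv i)) := by
      rw [hTt, hR4 t ht, sum_sub_distrib, htv]
      simp only [sum_const, card_univ, Fintype.card_fin, nsmul_eq_mul]
      ring_nf
    rw [hψT]
    refine prod_lt_exp_sum ⟨⟨0, hm⟩, mem_univ _⟩ (fun i _ => abs_nonneg _) fun i _ => ?_
    convert abs_lt_exp_sub_of_abs_exp_mul_lt (hp_small i) using 2
    rw [Pi.neg_apply, Int.cast_neg, sub_neg_eq_add, add_comm]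
  · have hT : T = exp (∑ j, (uv j - R t)) := by
      rw [hTt, sum_sub_distrib, huv]
      simp only [sum_const, card_univ, Fintype.card_fin, nsmul_eq_mul]
    rw [hT]
    refine prod_lt_exp_sum ⟨j₀, mem_univ _⟩ (fun j _ => le_max_of_le_right zero_le_one)
      fun j _ => max_lt ?_ (one_lt_exp_iff.mpr (by linarith [huv_gt j]))
    exact (abs_lt_exp_sub_of_abs_exp_mul_lt (hq_small j)).trans_eq (by ring_nf)

theorem stmt6 (m n : ℕ) (hm : 0 < m) (hn : 0 < n)
    (ψ : ℝ → ℝ) (hcont : ContinuousOn ψ (Set.Ici 1))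
    (hmono : ∀ x y : ℝ, 1 ≤ x → x ≤ y → ψ y ≤ ψ x)
    (hpos : ∀ x : ℝ, 1 ≤ x → 0 < ψ x) (hone : ∀ x : ℝ, 1 ≤ x → ψ x ≤ 1)
    (R : ℝ → ℝ)
    (hR1 : StrictMonoOn (fun t => t - (n : ℝ) * R t) (Set.Ici 0))
    (hR2 : Filter.Tendsto (fun t => t - (n : ℝ) * R t) Filter.atTop Filter.atTop)
    (hR3 : MonotoneOn (fun t => t + (m : ℝ) * R t) (Set.Ici 0))
    (hR4 : ∀ t : ℝ, 0 ≤ t →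
      ψ (Real.exp (t - (n : ℝ) * R t)) = Real.exp (-t - (m : ℝ) * R t))
    (Y : Matrix (Fin m) (Fin n) ℝ) (T : ℝ) (hT : 1 ≤ T)
    (t : ℝ) (ht : 0 ≤ t) (hTt : T = Real.exp (t - (n : ℝ) * R t))
    (hdyn : ∃ (tv : Fin m → ℝ) (uv : Fin n → ℝ),
        (∑ i, tv i) = t ∧ (∑ j, uv j) = t ∧
        (∀ i, -R t < tv i) ∧ (∀ j, R t < uv j) ∧
        ∃ (p : Fin m → ℤ) (q : Fin n → ℤ), ¬ (p = 0 ∧ q = 0) ∧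
          (∀ i, |Real.exp (tv i) * ((p i : ℝ) + ∑ j, Y i j * (q j : ℝ))|
              < Real.exp (-R t)) ∧
          (∀ j, |Real.exp (-(uv j)) * (q j : ℝ)| < Real.exp (-R t))) :
    ∃ (p : Fin m → ℤ) (q : Fin n → ℤ), q ≠ 0 ∧
      (∏ i, |(∑ j, Y i j * (q j : ℝ)) - (p i : ℝ)|) < ψ T ∧
      (∏ j, max |(q j : ℝ)| 1) < T :=
  stmt6_general m n hm ψ R hR4 Y T t ht hTt hdyn
end

section
/- Let l ≥ 1, β ≥ e, 0 < κ ≤ 1, and define h_{l,β}(x) := (log max(x, e^β))^{l−1} · log⁺ log max(x, e^β) and ψ(x) := κ/(x·h_{l,β}(x)). Let R be the function associated to ψ via the Dani correspondence with (m,n) = (1,l) or (l,1) (so ψ(e^{t−nR(t)}) = e^{−t−mR(t)} with m+n = l+1). Then for all t ≥ 0: e^{(l+1)R(t)} = κ^{−1}·h_{l,β}(e^{t−nR(t)}), and moreover κ^{−1} ≤ e^{(l+1)R(t)} ≤ κ^{−1}·(max(t,β))^{l−1}·log max(t,β). In particular, R is non-decreasing. -/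
/-- The function `h_{l,β}(x) = (log max(x, e^β))^(l-1) · log⁺ log max(x, e^β)`,
where `log⁺ y = log max(y, e)`. -/
noncomputable def hlb (l : ℕ) (β x : ℝ) : ℝ :=
  Real.log (max x (Real.exp β)) ^ (l - 1) *
    Real.log (max (Real.log (max x (Real.exp β))) (Real.exp 1))

/-!
Substituting `ψ(x) = κ / (x h(x))` into the Dani relation, the factors `e^{±t}` cancel and
`m + n = l + 1` leaves `e^{(l+1)R(t)} = κ⁻¹ h(e^{t-nR(t)})`. Since `h ≥ 1` this gives the lower
bound, and with `κ ≤ 1` also `R ≥ 0`, so `t - nR(t) ≤ t`; monotonicity of `h` then gives the upper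
bound `h(e^t) = max(t,β)^{l-1} log max(t,β)`, and, as `t - nR(t)` is increasing, that `R` is
non-decreasing.
-/

open Real

lemma le_log_max_exp (β x : ℝ) : β ≤ log (max x (exp β)) :=
  (log_exp β).ge.trans (log_le_log (exp_pos β) (le_max_right _ _))

lemma one_le_log_max_exp_one (y : ℝ) : 1 ≤ log (max y (exp 1)) :=
  le_log_max_exp 1 y

lemma one_le_hlb (l : ℕ) {β : ℝ} (hβ : 1 ≤ β) (x : ℝ) : 1 ≤ hlb l β x :=
  one_le_mul_of_one_le_of_one_le (one_le_pow₀ (hβ.trans (le_log_max_exp β x)))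
    (one_le_log_max_exp_one _)

lemma hlb_monotone (l : ℕ) {β : ℝ} (hβ : 0 ≤ β) : Monotone (hlb l β) := by
  intro x y hxy
  have hlog : log (max x (exp β)) ≤ log (max y (exp β)) :=
    log_le_log ((exp_pos β).trans_le (le_max_right _ _)) (max_le_max hxy le_rfl)
  have hlog_nonneg : 0 ≤ log (max x (exp β)) := hβ.trans (le_log_max_exp β x)
  exact mul_le_mul (pow_le_pow_left₀ hlog_nonneg hlog _)
    (log_le_log ((exp_pos 1).trans_le (le_max_right _ _)) (max_le_max hlog le_rfl))
    (zero_le_one.trans (one_le_log_max_exp_one _)) (pow_nonneg (hlog_nonneg.trans hlog) _)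

lemma hlb_exp (l : ℕ) {β : ℝ} (hβ : exp 1 ≤ β) (t : ℝ) :
    hlb l β (exp t) = max t β ^ (l - 1) * log (max t β) := by
  rw [hlb, ← exp_monotone.map_max, log_exp, max_eq_left (hβ.trans (le_max_right _ _))]

lemma exp_mul_eq_inv_mul_of_div_eq {κ h m n t r : ℝ} (hh : 0 < h)
    (hψ : κ / (exp (t - n * r) * h) = exp (-t - m * r)) :
    exp ((m + n) * r) = κ⁻¹ * h := by
  rw [div_eq_iff (mul_pos (exp_pos _) hh).ne'] at hψ
  have hκ : κ = exp (-((m + n) * r)) * h := by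
    rw [hψ, ← mul_assoc, ← exp_add]
    ring_nf
  rw [hκ, mul_inv, exp_neg, inv_inv, mul_assoc, inv_mul_cancel₀ hh.ne', mul_one]

theorem stmt7_general (l : ℕ) (β κ : ℝ) (hβ : Real.exp 1 ≤ β)
    (hκ0 : 0 < κ) (hκ1 : κ ≤ 1)
    (m n : ℕ) (hmn : (m = 1 ∧ n = l) ∨ (m = l ∧ n = 1))
    (R : ℝ → ℝ)
    (hR1 : StrictMonoOn (fun t => t - (n : ℝ) * R t) (Set.Ici 0))
    (hR4 : ∀ t : ℝ, 0 ≤ t →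
      κ / (Real.exp (t - (n : ℝ) * R t) * hlb l β (Real.exp (t - (n : ℝ) * R t)))
        = Real.exp (-t - (m : ℝ) * R t)) :
    (∀ t : ℝ, 0 ≤ t →
        Real.exp ((l + 1 : ℝ) * R t) = κ⁻¹ * hlb l β (Real.exp (t - (n : ℝ) * R t)) ∧
        κ⁻¹ ≤ Real.exp ((l + 1 : ℝ) * R t) ∧
        Real.exp ((l + 1 : ℝ) * R t)
          ≤ κ⁻¹ * max t β ^ (l - 1) * Real.log (max t β)) ∧
      MonotoneOn R (Set.Ici 0) := by
  have hβ1 : 1 ≤ β := (one_le_exp zero_le_one).trans hβ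
  have hsum : (m + n : ℝ) = l + 1 := by
    rcases hmn with ⟨rfl, rfl⟩ | ⟨rfl, rfl⟩ <;> push_cast <;> ring
  have hl : (0 : ℝ) < l + 1 := by positivity
  have hformula (t : ℝ) (ht : 0 ≤ t) :
      exp ((l + 1 : ℝ) * R t) = κ⁻¹ * hlb l β (exp (t - n * R t)) :=
    hsum ▸ exp_mul_eq_inv_mul_of_div_eq (zero_lt_one.trans_le (one_le_hlb l hβ1 _)) (hR4 t ht)
  have hlower (t : ℝ) (ht : 0 ≤ t) : κ⁻¹ ≤ exp ((l + 1 : ℝ) * R t) := by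
    rw [hformula t ht]
    exact le_mul_of_one_le_right (inv_pos.2 hκ0).le (one_le_hlb l hβ1 _)
  have hR_nonneg (t : ℝ) (ht : 0 ≤ t) : 0 ≤ R t := by
    have := one_le_exp_iff.1 ((one_le_inv₀ hκ0).2 hκ1 |>.trans (hlower t ht))
    exact nonneg_of_mul_nonneg_right this hl
  refine ⟨fun t ht => ⟨hformula t ht, hlower t ht, ?_⟩, fun a ha b hb hab => ?_⟩
  · calc exp ((l + 1 : ℝ) * R t) = κ⁻¹ * hlb l β (exp (t - n * R t)) := hformula t ht
      _ ≤ κ⁻¹ * hlb l β (exp t) := by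
        gcongr
        exact hlb_monotone l (zero_le_one.trans hβ1)
          (exp_le_exp.2 (sub_le_self t (mul_nonneg n.cast_nonneg (hR_nonneg t ht))))
      _ = κ⁻¹ * max t β ^ (l - 1) * log (max t β) := by rw [hlb_exp l hβ, mul_assoc]
  · have hexp : exp ((l + 1 : ℝ) * R a) ≤ exp ((l + 1 : ℝ) * R b) := by
      rw [hformula a ha, hformula b hb]
      gcongr
      exact hlb_monotone l (zero_le_one.trans hβ1) (exp_le_exp.2 (hR1.monotoneOn ha hb hab))
    exact le_of_mul_le_mul_left (exp_le_exp.1 hexp) hl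

theorem stmt7 (l : ℕ) (hl : 1 ≤ l) (β κ : ℝ) (hβ : Real.exp 1 ≤ β)
    (hκ0 : 0 < κ) (hκ1 : κ ≤ 1)
    (m n : ℕ) (hmn : (m = 1 ∧ n = l) ∨ (m = l ∧ n = 1))
    (R : ℝ → ℝ)
    (hRcont : ContinuousOn R (Set.Ici 0))
    (hR1 : StrictMonoOn (fun t => t - (n : ℝ) * R t) (Set.Ici 0))
    (hR2 : Filter.Tendsto (fun t => t - (n : ℝ) * R t) Filter.atTop Filter.atTop)
    (hR3 : MonotoneOn (fun t => t + (m : ℝ) * R t) (Set.Ici 0))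
    (hR4 : ∀ t : ℝ, 0 ≤ t →
      κ / (Real.exp (t - (n : ℝ) * R t) * hlb l β (Real.exp (t - (n : ℝ) * R t)))
        = Real.exp (-t - (m : ℝ) * R t)) :
    (∀ t : ℝ, 0 ≤ t →
        Real.exp ((l + 1 : ℝ) * R t) = κ⁻¹ * hlb l β (Real.exp (t - (n : ℝ) * R t)) ∧
        κ⁻¹ ≤ Real.exp ((l + 1 : ℝ) * R t) ∧
        Real.exp ((l + 1 : ℝ) * R t)
          ≤ κ⁻¹ * max t β ^ (l - 1) * Real.log (max t β)) ∧
      MonotoneOn R (Set.Ici 0) :=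
  stmt7_general l β κ hβ hκ0 hκ1 m n hmn R hR1 hR4
end

section
/- Let l ≥ 1, β ≥ e, and 0 < κ ≤ 1 with |log κ| ≤ e^β. Let R and R* be the functions associated via the Dani correspondence to ψ(x) = κ/(x·h_{l,β}(x)) for (m,n) = (l,1) and (m,n) = (1,l) respectively, where h_{l,β}(x) := (log max(x,e^β))^{l−1}·log⁺log max(x,e^β). Then there is a constant C depending only on l such that |R(t) − R*(t)| ≤ C·β for all t ≥ 0. -/
/-!
Taking logarithms, the Dani equation `ψ(e^{t - n R}) = e^{-t - m R}` for `ψ(x) = κ / (x h(x))`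
becomes `(m + n) R(t) = L(t - n R(t))` with the non-decreasing, non-negative potential
`L(u) = log (h(e^u) / κ)`. Writing `r = R(t)`, `s = R*(t)`, `a = t - r`, `b = t - l s`,
monotonicity of `L` forces `s ≤ r ≤ l s`, so `b ≤ a ≤ b + L(b)` and
`(l + 1)(r - s) = L(a) - L(b)`. Finally `L(u) = (l - 1) Λ + log Λ - log κ` with
`Λ = log max(u, β) ≥ 1`; as `-log κ ≤ e^β`, moving `u` up by at most `L(u)` multiplies
`max(u, β)` by at most `l + 2 + e^β`, so `Λ` grows by at most `l + 2 + β` and `L` by `l + 1`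
times that.
-/

open Real

lemma log_sub_log_le_sub {x y : ℝ} (hy : 1 ≤ y) (hyx : y ≤ x) : log x - log y ≤ x - y := by
  have hy0 : 0 < y := by linarith
  calc log x - log y = log (x / y) := (log_div (by linarith) hy0.ne').symm
    _ ≤ x / y - 1 := log_le_sub_one_of_pos (div_pos (by linarith) hy0)
    _ = (x - y) / y := by field_simp
    _ ≤ x - y := div_le_self (by linarith) hy

section DaniComparison

variable {L : ℝ → ℝ} {l t r s : ℝ}

lemma le_of_dani_eq (hL : Monotone L) (hl : 1 ≤ l) (hs0 : 0 ≤ s)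
    (hr : (1 + l) * r = L (t - r)) (hs : (1 + l) * s = L (t - l * s)) : s ≤ r := by
  by_contra! hrs
  have hlt : L (t - r) < L (t - l * s) := by
    rw [← hr, ← hs]
    exact mul_lt_mul_of_pos_left hrs (by linarith)
  nlinarith [hL.reflect_lt hlt]

lemma le_mul_of_dani_eq (hL : Monotone L) (hl : 1 ≤ l) (hs0 : 0 ≤ s)
    (hr : (1 + l) * r = L (t - r)) (hs : (1 + l) * s = L (t - l * s)) : r ≤ l * s := by
  by_contra! hsr
  have hle : L (t - r) ≤ L (t - l * s) := hL (by linarith)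
  rw [← hr, ← hs] at hle
  nlinarith [le_of_mul_le_mul_left hle (by linarith)]

theorem abs_sub_le_of_dani_eq (hL : Monotone L) (hL0 : ∀ u, 0 ≤ L u) {D : ℝ}
    (hD : ∀ a b, b ≤ a → a ≤ b + L b → L a - L b ≤ (1 + l) * D) (hl : 1 ≤ l)
    (hr : (1 + l) * r = L (t - r)) (hs : (1 + l) * s = L (t - l * s)) : |r - s| ≤ D := by
  have hl0 : 0 < 1 + l := by linarith
  have hs0 : 0 ≤ s := nonneg_of_mul_nonneg_right (hs ▸ hL0 _) hl0
  have hsr := le_of_dani_eq hL hl hs0 hr hs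
  have hrl := le_mul_of_dani_eq hL hl hs0 hr hs
  have hgap := hD (t - r) (t - l * s) (by linarith) (by rw [← hs]; nlinarith)
  rw [← hr, ← hs] at hgap
  rw [abs_of_nonneg (sub_nonneg.2 hsr)]
  exact le_of_mul_le_mul_left (by linarith) hl0

end DaniComparison

section Potential

variable {l : ℕ} {β κ : ℝ}

/-- `-log (e^u ψ(e^u))` for `ψ(x) = κ / (x h_{l,β}(x))`. -/
noncomputable def daniPotential (l : ℕ) (β κ u : ℝ) : ℝ := log (hlb l β (exp u) / κ)

lemma hlb_pos (hβ : 0 < β) (x : ℝ) : 0 < hlb l β x := by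
  have h1 : β ≤ log (max x (exp β)) := by
    rw [le_log_iff_exp_le (by positivity)]
    exact le_max_right _ _
  have h2 : 1 ≤ log (max (log (max x (exp β))) (exp 1)) := by
    rw [le_log_iff_exp_le (by positivity)]
    exact le_max_right _ _
  unfold hlb
  exact mul_pos (pow_pos (by linarith) _) (by linarith)

lemma add_sub_eq_daniPotential (hβ : 0 < β) (hκ : 0 < κ) {t u x : ℝ}
    (h : κ / (exp u * hlb l β (exp u)) = exp (-t - x)) : t - u + x = daniPotential l β κ u := by
  have hh := hlb_pos (l := l) hβ (exp u)
  have hdiv : hlb l β (exp u) / κ = exp (t - u + x) := by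
    rw [show t - u + x = -(-t - x) - u by ring, exp_sub, exp_neg, ← h]
    field_simp
  rw [daniPotential, hdiv, log_exp]

lemma exp_one_le_max (hβ : exp 1 ≤ β) (u : ℝ) : exp 1 ≤ max u β :=
  hβ.trans (le_max_right _ _)

lemma one_le_log_max (hβ : exp 1 ≤ β) (u : ℝ) : 1 ≤ log (max u β) := by
  rw [le_log_iff_exp_le ((exp_pos 1).trans_le (exp_one_le_max hβ u))]
  exact exp_one_le_max hβ u

lemma daniPotential_eq (hβ : exp 1 ≤ β) (hκ : 0 < κ) (u : ℝ) :
    daniPotential l β κ u =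
      ((l - 1 : ℕ) : ℝ) * log (max u β) + log (log (max u β)) - log κ := by
  have hβ0 : 0 < β := (exp_pos 1).trans_le hβ
  have hΛ := one_le_log_max hβ u
  have hexp : max (exp u) (exp β) = exp (max u β) := exp_monotone.map_max.symm
  rw [daniPotential, log_div (hlb_pos hβ0 _).ne' hκ.ne', hlb, hexp, log_exp,
    max_eq_left (exp_one_le_max hβ u), log_mul (by positivity) (by positivity), log_pow]

lemma monotone_daniPotential (hβ : exp 1 ≤ β) (hκ : 0 < κ) : Monotone (daniPotential l β κ) := by
  intro a b hab
  have hΛ : log (max a β) ≤ log (max b β) :=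
    log_le_log ((exp_pos 1).trans_le (exp_one_le_max hβ a)) (max_le_max_right β hab)
  have hlogΛ : log (log (max a β)) ≤ log (log (max b β)) :=
    log_le_log (by linarith [one_le_log_max hβ a]) hΛ
  rw [daniPotential_eq hβ hκ, daniPotential_eq hβ hκ]
  gcongr

lemma daniPotential_nonneg (hβ : exp 1 ≤ β) (hκ : 0 < κ) (hκ1 : κ ≤ 1) (u : ℝ) :
    0 ≤ daniPotential l β κ u := by
  have hΛ := one_le_log_max hβ u
  rw [daniPotential_eq hβ hκ]
  nlinarith [log_nonneg hΛ, log_nonpos hκ.le hκ1, (Nat.cast_nonneg (l - 1) : (0 : ℝ) ≤ _)]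

lemma daniPotential_le (hβ : exp 1 ≤ β) (hκ : 0 < κ) (hκβ : -log κ ≤ exp β) (u : ℝ) :
    daniPotential l β κ u ≤ (l + 1) * log (max u β) + exp β := by
  have hΛ := one_le_log_max hβ u
  have hk : ((l - 1 : ℕ) : ℝ) ≤ l := Nat.cast_le.2 (Nat.sub_le l 1)
  rw [daniPotential_eq hβ hκ]
  nlinarith [log_le_self (zero_le_one.trans hΛ)]

lemma log_max_sub_log_max_le (hβ : exp 1 ≤ β) (hκ : 0 < κ) (hκ1 : κ ≤ 1)
    (hκβ : -log κ ≤ exp β) {a b : ℝ} (hab : a ≤ b + daniPotential l β κ b) :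
    log (max a β) - log (max b β) ≤ l + 2 + β := by
  set M := max b β
  have hM : exp 1 ≤ M := exp_one_le_max hβ b
  have hM1 : 1 ≤ M := (one_le_exp zero_le_one).trans hM
  have hβM : β ≤ M := le_max_right _ _
  have hΛM : log M ≤ M := log_le_self (by linarith)
  have hLb := daniPotential_le (l := l) hβ hκ hκβ b
  have hLb0 := daniPotential_nonneg (l := l) hβ hκ hκ1 b
  have heβ : 1 ≤ exp β := one_le_exp (by linarith [add_one_le_exp (1 : ℝ)])
  have hA : max a β ≤ (l + 2 + exp β) * M :=
    calc max a β ≤ M + daniPotential l β κ b :=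
          max_le (by linarith [le_max_left b β]) (by linarith)
      _ ≤ M + (l + 1) * log M + exp β := by linarith
      _ ≤ (l + 2 + exp β) * M := by nlinarith
  have hl3 : (0 : ℝ) < l + 3 := by positivity
  calc log (max a β) - log M ≤ log ((l + 2 + exp β) * M) - log M := by
        gcongr
        exact (exp_pos 1).trans_le (exp_one_le_max hβ a)
    _ = log (l + 2 + exp β) := by
        rw [log_mul (by positivity) (by positivity)]
        ring
    _ ≤ log ((l + 3) * exp β) := log_le_log (by positivity) (by nlinarith)
    _ = log (l + 3) + β := by rw [log_mul hl3.ne' (exp_pos β).ne', log_exp]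
    _ ≤ l + 2 + β := by linarith [log_le_sub_one_of_pos hl3]

lemma daniPotential_sub_le (hβ : exp 1 ≤ β) (hκ : 0 < κ) (hκ1 : κ ≤ 1)
    (hκβ : -log κ ≤ exp β) {a b : ℝ} (hba : b ≤ a) (hab : a ≤ b + daniPotential l β κ b) :
    daniPotential l β κ a - daniPotential l β κ b ≤ (1 + l) * (l + 2 + β) := by
  have hB := one_le_log_max hβ b
  have hBA : log (max b β) ≤ log (max a β) :=
    log_le_log (by linarith [exp_one_le_max hβ b, exp_pos 1]) (max_le_max_right β hba)
  have hgap := log_max_sub_log_max_le hβ hκ hκ1 hκβ hab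
  have hlog := log_sub_log_le_sub hB hBA
  have hk : ((l - 1 : ℕ) : ℝ) ≤ l := Nat.cast_le.2 (Nat.sub_le l 1)
  rw [daniPotential_eq hβ hκ, daniPotential_eq hβ hκ]
  nlinarith

end Potential

theorem stmt9 (l : ℕ) (hl : 1 ≤ l) :
    ∃ C : ℝ, 0 < C ∧
      ∀ (β κ : ℝ), Real.exp 1 ≤ β → 0 < κ → κ ≤ 1 → |Real.log κ| ≤ Real.exp β →
      ∀ R Rs : ℝ → ℝ,
        -- `R` : Dani correspondence function for `(m, n) = (l, 1)`
        (ContinuousOn R (Set.Ici 0) ∧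
          StrictMonoOn (fun t => t - R t) (Set.Ici 0) ∧
          Filter.Tendsto (fun t => t - R t) Filter.atTop Filter.atTop ∧
          MonotoneOn (fun t => t + (l : ℝ) * R t) (Set.Ici 0) ∧
          ∀ t : ℝ, 0 ≤ t →
            κ / (Real.exp (t - R t) * hlb l β (Real.exp (t - R t)))
              = Real.exp (-t - (l : ℝ) * R t)) →
        -- `Rs` : Dani correspondence function for `(m, n) = (1, l)`
        (ContinuousOn Rs (Set.Ici 0) ∧
          StrictMonoOn (fun t => t - (l : ℝ) * Rs t) (Set.Ici 0) ∧
          Filter.Tendsto (fun t => t - (l : ℝ) * Rs t) Filter.atTop Filter.atTop ∧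
          MonotoneOn (fun t => t + Rs t) (Set.Ici 0) ∧
          ∀ t : ℝ, 0 ≤ t →
            κ / (Real.exp (t - (l : ℝ) * Rs t) * hlb l β (Real.exp (t - (l : ℝ) * Rs t)))
              = Real.exp (-t - Rs t)) →
        ∀ t : ℝ, 0 ≤ t → |R t - Rs t| ≤ C * β := by
  refine ⟨l + 3, by positivity, ?_⟩
  rintro β κ hβ hκ hκ1 hκβ R Rs ⟨-, -, -, -, hR⟩ ⟨-, -, -, -, hRs⟩ t ht
  have hβ1 : 1 ≤ β := (one_le_exp zero_le_one).trans hβ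
  have hβ0 : 0 < β := by linarith
  have hr : (1 + l) * R t = daniPotential l β κ (t - R t) := by
    rw [← add_sub_eq_daniPotential hβ0 hκ (hR t ht)]
    ring
  have hs : (1 + l) * Rs t = daniPotential l β κ (t - l * Rs t) := by
    rw [← add_sub_eq_daniPotential hβ0 hκ (hRs t ht)]
    ring
  calc |R t - Rs t| ≤ l + 2 + β :=
        abs_sub_le_of_dani_eq (monotone_daniPotential hβ hκ) (daniPotential_nonneg hβ hκ hκ1)
          (fun _ _ hba hab => daniPotential_sub_le hβ hκ hκ1 ((neg_le_abs _).trans hκβ) hba hab)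
          (by exact_mod_cast hl) hr hs
    _ ≤ (l + 3) * β := by nlinarith
end

section
/- Let m, n ∈ ℕ and Y ∈ ℝ^{m×n}. Define a_t := diag(e^{t/m},…,e^{t/m}, e^{−t/n},…,e^{−t/n}) (m copies of e^{t/m}, n copies of e^{−t/n}) and Λ_Y the lattice spanned by the columns of the block matrix with I_m, Y on top and 0, I_n below. Then Y is badly approximable — i.e. there exists c > 0 such that for all T ≥ 1 there is no solution p ∈ ℤ^m, q ∈ ℤ^n\{0} to ‖Yq − p‖_∞^m < c/T and ‖q‖_∞^n < T — if and only if inf_{t ≥ 0} δ(a_t Λ_Y) > 0, where δ denotes the sup-norm first minimum. -/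
/-! Raising to the `m`-th and `n`-th powers, the conditions `exp (t/m) ‖p + Yq‖ < ε` and
`exp (-t/n) ‖q‖ < ε` on a vector of `a_t Λ_Y` become `‖Yq + p‖ ^ m < ε ^ (m+n) / T` and
`‖q‖ ^ n < T` with `T = ε ^ n e^t`. So short vectors of `a_t Λ_Y` (`t ≥ 0`) are exactly good
approximations at height `T ≥ 1`, up to adjusting the constants; vectors with `q = 0` are
never short because `a_t` expands the first block and `p ≠ 0` is integral. -/

open Real Matrix

theorem Real.exp_div_nat_pow (t : ℝ) {k : ℕ} (hk : k ≠ 0) : exp (t / k) ^ k = exp t := by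
  rw [← exp_nat_mul, mul_div_cancel₀ _ (Nat.cast_ne_zero.mpr hk)]

theorem Real.exp_div_nat_mul_lt_iff {t r ε : ℝ} {k : ℕ} (hk : k ≠ 0) (hr : 0 ≤ r) (hε : 0 ≤ ε) :
    exp (t / k) * r < ε ↔ exp t * r ^ k < ε ^ k := by
  rw [← pow_lt_pow_iff_left₀ (by positivity) hε hk, mul_pow, exp_div_nat_pow t hk]

theorem exists_le_abs_mul_apply_iff {ι : Type*} [Fintype ι] {a ε : ℝ} (hε : 0 < ε) (x : ι → ℝ) :
    (∃ i, ε ≤ |a * x i|) ↔ ε ≤ |a| * ‖x‖ := by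
  rw [← Real.norm_eq_abs, ← norm_smul, ← not_iff_not]
  push Not
  exact (pi_norm_lt_iff (x := a • x) hε).symm

theorem one_le_norm_intCast_comp {ι : Type*} [Fintype ι] {p : ι → ℤ} (hp : p ≠ 0) :
    1 ≤ ‖(Int.cast ∘ p : ι → ℝ)‖ := by
  obtain ⟨i, hi⟩ := Function.ne_iff.mp hp
  calc (1 : ℝ) ≤ |(p i : ℝ)| := by exact_mod_cast Int.one_le_abs hi
    _ ≤ ‖(Int.cast ∘ p : ι → ℝ)‖ := norm_le_pi_norm (Int.cast ∘ p : ι → ℝ) i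

section

variable {m n : ℕ} (Y : Matrix (Fin m) (Fin n) ℝ)

theorem exists_le_abs_flow_coord_iff {ε : ℝ} (hε : 0 < ε) (t : ℝ) (p : Fin m → ℤ) (q : Fin n → ℤ) :
    ((∃ i, ε ≤ |exp (t / m) * ((p i : ℝ) + ∑ j, Y i j * (q j : ℝ))|) ∨
        (∃ j, ε ≤ |exp (-(t / n)) * (q j : ℝ)|)) ↔
      ¬ (exp (t / m) * ‖Int.cast ∘ p + Y *ᵥ Int.cast ∘ q‖ < ε ∧
        exp (-(t / n)) * ‖(Int.cast ∘ q : Fin n → ℝ)‖ < ε) := by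
  have hflow (s : ℝ) {ι : Type} [Fintype ι] (x : ι → ℝ) :=
    abs_of_pos (exp_pos s) ▸ exists_le_abs_mul_apply_iff (a := exp s) hε x
  rw [not_and_or, not_lt, not_lt]
  exact (hflow _ (Int.cast ∘ p + Y *ᵥ Int.cast ∘ q)).or (hflow _ (Int.cast ∘ q))

theorem norm_mulVec_sub_intCast_comp_neg (p : Fin m → ℤ) (q : Fin n → ℤ) :
    ‖Y *ᵥ Int.cast ∘ q - Int.cast ∘ (-p)‖ = ‖Int.cast ∘ p + Y *ᵥ Int.cast ∘ q‖ := by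
  have hneg : (Int.cast ∘ (-p) : Fin m → ℝ) = -(Int.cast ∘ p) := by ext; simp
  rw [hneg, sub_neg_eq_add, add_comm]

theorem flow_vector_not_small_of_badlyApprox (hm : 0 < m) (hn : 0 < n) {c : ℝ} (hc : 0 < c)
    (hBA : ∀ T : ℝ, 1 ≤ T → ∀ (p : Fin m → ℤ) (q : Fin n → ℤ), q ≠ 0 →
      ¬ (‖Y *ᵥ Int.cast ∘ q - Int.cast ∘ p‖ ^ m < c / T ∧ ‖(Int.cast ∘ q : Fin n → ℝ)‖ ^ n < T))
    {t : ℝ} (ht : 0 ≤ t) (p : Fin m → ℤ) (q : Fin n → ℤ) (hpq : ¬ (p = 0 ∧ q = 0)) :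
    ¬ (exp (t / m) * ‖Int.cast ∘ p + Y *ᵥ Int.cast ∘ q‖ < min 1 c ∧
      exp (-(t / n)) * ‖(Int.cast ∘ q : Fin n → ℝ)‖ < min 1 c) := by
  set ε := min 1 c
  have hε : 0 < ε := lt_min one_pos hc
  rintro ⟨hx, hy⟩
  rcases eq_or_ne q 0 with rfl | hq
  · have hp : 1 ≤ ‖(Int.cast ∘ p : Fin m → ℝ)‖ := one_le_norm_intCast_comp fun hp => hpq ⟨hp, rfl⟩
    have hexp : 1 ≤ exp (t / m) := one_le_exp (by positivity)
    have hq0 : (Int.cast ∘ (0 : Fin n → ℤ) : Fin n → ℝ) = 0 := by ext; simp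
    rw [hq0, mulVec_zero, add_zero] at hx
    nlinarith [min_le_left 1 c]
  set T := ε ^ n * exp t
  rw [exp_div_nat_mul_lt_iff hm.ne' (norm_nonneg _) hε.le] at hx
  rw [← neg_div, exp_div_nat_mul_lt_iff hn.ne' (norm_nonneg _) hε.le, exp_neg] at hy
  have hyT : ‖(Int.cast ∘ q : Fin n → ℝ)‖ ^ n < T := by
    rwa [inv_mul_lt_iff₀ (exp_pos t), mul_comm] at hy
  have hT : 1 ≤ T := (one_le_pow₀ (one_le_norm_intCast_comp hq)).trans hyT.le
  refine hBA T hT (-p) q hq ⟨?_, hyT⟩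
  have hεc : ε ^ (m + n) ≤ c :=
    (pow_le_of_le_one hε.le (min_le_left 1 c) (by omega)).trans (min_le_right 1 c)
  calc ‖Y *ᵥ Int.cast ∘ q - Int.cast ∘ (-p)‖ ^ m
      = ‖Int.cast ∘ p + Y *ᵥ Int.cast ∘ q‖ ^ m := by
        rw [norm_mulVec_sub_intCast_comp_neg]
    _ < ε ^ (m + n) / T := by
        rw [lt_div_iff₀ (by positivity), pow_add]
        nlinarith [pow_pos hε n]
    _ ≤ c / T := by gcongr

theorem badlyApprox_of_flow_vector_not_small (hm : 0 < m) (hn : 0 < n) {ε : ℝ} (hε : 0 < ε)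
    (hδ : ∀ t : ℝ, 0 ≤ t → ∀ (p : Fin m → ℤ) (q : Fin n → ℤ), ¬ (p = 0 ∧ q = 0) →
      ¬ (exp (t / m) * ‖Int.cast ∘ p + Y *ᵥ Int.cast ∘ q‖ < ε ∧
        exp (-(t / n)) * ‖(Int.cast ∘ q : Fin n → ℝ)‖ < ε))
    {T : ℝ} (hT : 1 ≤ T) (p : Fin m → ℤ) (q : Fin n → ℤ) (hq : q ≠ 0) :
    ¬ (‖Y *ᵥ Int.cast ∘ q - Int.cast ∘ p‖ ^ m < min ε 1 ^ (m + n) / T ∧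
      ‖(Int.cast ∘ q : Fin n → ℝ)‖ ^ n < T) := by
  set ε' := min ε 1
  have hε' : 0 < ε' := lt_min hε one_pos
  rintro ⟨hx, hy⟩
  have hTε : 1 ≤ T / ε' ^ n := by
    rw [le_div_iff₀ (by positivity), one_mul]
    exact (pow_le_one₀ hε'.le (min_le_right ε 1)).trans hT
  -- `t` is chosen so that `T = ε' ^ n * exp t`
  set t := log (T / ε' ^ n)
  have het : exp t = T / ε' ^ n := exp_log (by linarith)
  refine hδ t (log_nonneg hTε) (-p) q (fun h => hq h.2)
    ⟨lt_of_lt_of_le ?_ (min_le_left ε 1), lt_of_lt_of_le ?_ (min_le_left ε 1)⟩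
  · rw [exp_div_nat_mul_lt_iff hm.ne' (norm_nonneg _) hε'.le, ← norm_mulVec_sub_intCast_comp_neg,
      neg_neg, het]
    calc T / ε' ^ n * ‖Y *ᵥ Int.cast ∘ q - Int.cast ∘ p‖ ^ m < T / ε' ^ n * (ε' ^ (m + n) / T) := by
          gcongr
      _ = ε' ^ m := by field_simp; ring
  · rw [← neg_div, exp_div_nat_mul_lt_iff hn.ne' (norm_nonneg _) hε'.le, exp_neg, het, inv_div]
    calc ε' ^ n / T * ‖(Int.cast ∘ q : Fin n → ℝ)‖ ^ n < ε' ^ n / T * T := by gcongr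
      _ = ε' ^ n := div_mul_cancel₀ _ (by positivity)

end

theorem stmt19 (m n : ℕ) (hm : 0 < m) (hn : 0 < n)
    (Y : Matrix (Fin m) (Fin n) ℝ) :
    -- `Y` is badly approximable
    (∃ c : ℝ, 0 < c ∧ ∀ T : ℝ, 1 ≤ T →
        ¬ ∃ (p : Fin m → ℤ) (q : Fin n → ℤ), q ≠ 0 ∧
          (‖fun i => (∑ j, Y i j * (q j : ℝ)) - (p i : ℝ)‖ : ℝ) ^ m < c / T ∧
          (‖fun j => (q j : ℝ)‖ : ℝ) ^ n < T)
      ↔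
    -- the `a_t`-orbit of `Λ_Y` has first minima bounded away from zero
    (∃ ε : ℝ, 0 < ε ∧ ∀ t : ℝ, 0 ≤ t →
        ∀ (p : Fin m → ℤ) (q : Fin n → ℤ), ¬ (p = 0 ∧ q = 0) →
          (∃ i, ε ≤ |Real.exp (t / m) * ((p i : ℝ) + ∑ j, Y i j * (q j : ℝ))|) ∨
          (∃ j, ε ≤ |Real.exp (-(t / n)) * (q j : ℝ)|)) := by
  constructor
  · rintro ⟨c, hc, hBA⟩
    have hε : 0 < min 1 c := lt_min one_pos hc
    refine ⟨min 1 c, hε, fun t ht p q hpq => (exists_le_abs_flow_coord_iff Y hε t p q).2 ?_⟩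
    exact flow_vector_not_small_of_badlyApprox Y hm hn hc
      (fun T hT p q hq hpq => hBA T hT ⟨p, q, hq, hpq⟩) ht p q hpq
  · rintro ⟨ε, hε, hδ⟩
    refine ⟨min ε 1 ^ (m + n), pow_pos (lt_min hε one_pos) _, fun T hT ⟨p, q, hq, hpq⟩ => ?_⟩
    exact badlyApprox_of_flow_vector_not_small Y hm hn hε
      (fun t ht p q hpq => (exists_le_abs_flow_coord_iff Y hε t p q).1 (hδ t ht p q hpq)) hT p q hq hpq
end
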